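/- Let P be a normal logic program, I = ⟨T, F⟩ a 3-valued interpretation of P, and Ω_P(I) = ⟨T', F'⟩ the least 3-valued model of the reduct P/I. Then (i) an atom c belongs to T' if and only if there exists a statement s constructed from P with Conc(s) = c and Vul(s) ⊆ F; and (ii) c belongs to F' if and only if every statement s constructed from P with Conc(s) = c satisfies Vul(s) ∩ T ≠ ∅. -/
import Mathlib


/-- A rule of a normal logic program:
`head ← bodyPos, not bodyNeg`. -/
structure Rule (α : Type) where
  head : α
  bodyPos : Finset α
  bodyNeg : Finset α
deriving DecidableEq

/-- A normal logic program (NLP): a finite set of rules. -/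
abbrev NLP (α : Type) := Finset (Rule α)

variable {α : Type} [DecidableEq α]

/-- The atoms occurring in a rule. -/
def Rule.atoms (r : Rule α) : Finset α :=
  insert r.head (r.bodyPos ∪ r.bodyNeg)

/-- The Herbrand base of a program: all atoms occurring in it. -/
def HB (P : NLP α) : Finset α := P.sup Rule.atoms

/-- A three-valued interpretation, given by its sets of true and false atoms. -/
structure Interp (α : Type) where
  T : Set α
  F : Set α

/-- `I` is a 3-valued interpretation over the Herbrand base `H`. -/
def IsInterp (H : Finset α) (I : Interp α) : Prop :=
  I.T ⊆ ↑H ∧ I.F ⊆ ↑H ∧ Disjoint I.T I.F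

/-- A rule of a positive program obtained as a reduct; `hasU` records whether
the special atom `u` (undefined in every interpretation) occurs in its body. -/
structure PosRule (α : Type) where
  head : α
  bodyPos : Finset α
  hasU : Prop

/-- The reduct `P/I`: delete every rule whose negative body meets `I.T`,
delete each `not b` with `b ∈ I.F`, and replace the remaining negative
literals by the special atom `u`. -/
def reduct (P : NLP α) (I : Interp α) : Set (PosRule α) :=
  { q | ∃ r ∈ P, (∀ b ∈ r.bodyNeg, b ∉ I.T) ∧
        q.head = r.head ∧ q.bodyPos = r.bodyPos ∧
        (q.hasU ↔ ∃ b ∈ r.bodyNeg, b ∉ I.F) }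

/-- The `Ψ` operator of a positive program `Q` relative to the Herbrand base
`H`; the special atom `u` is neither true nor false in any interpretation. -/
def PsiOp (H : Finset α) (Q : Set (PosRule α)) (J : Interp α) : Interp α where
  T := { c | c ∈ H ∧ ∃ q ∈ Q, q.head = c ∧ ¬ q.hasU ∧ ∀ a ∈ q.bodyPos, a ∈ J.T }
  F := { c | c ∈ H ∧ ∀ q ∈ Q, q.head = c → ∃ a ∈ q.bodyPos, a ∈ J.F }

/-- Iteration of `Ψ` starting from `⟨∅, H⟩`. -/
def PsiIter (H : Finset α) (Q : Set (PosRule α)) : ℕ → Interp α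
  | 0 => ⟨∅, ↑H⟩
  | n + 1 => PsiOp H Q (PsiIter H Q n)

/-- `Ω_P(I)`: the least three-valued model of the reduct `P/I`,
obtained as the `ω`-iteration of `Ψ`. -/
def OmegaOp (H : Finset α) (P : NLP α) (I : Interp α) : Interp α where
  T := ⋃ n, (PsiIter H (reduct P I) n).T
  F := ⋂ n, (PsiIter H (reduct P I) n).F

/-- `I` is a partial stable model of `P` (over Herbrand base `H`). -/
def IsPSModel (H : Finset α) (P : NLP α) (I : Interp α) : Prop :=
  IsInterp H I ∧ OmegaOp H P I = I

/-- Well-founded model: a partial stable model with `⊆`-minimal true part. -/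
def IsWFModel (H : Finset α) (P : NLP α) (I : Interp α) : Prop :=
  IsPSModel H P I ∧ ∀ J, IsPSModel H P J → ¬ J.T ⊂ I.T

/-- Regular model: a partial stable model with `⊆`-maximal true part. -/
def IsRegularModel (H : Finset α) (P : NLP α) (I : Interp α) : Prop :=
  IsPSModel H P I ∧ ∀ J, IsPSModel H P J → ¬ I.T ⊂ J.T

/-- Stable model: a partial stable model with `T ∪ F = H`. -/
def IsStableModel (H : Finset α) (P : NLP α) (I : Interp α) : Prop :=
  IsPSModel H P I ∧ I.T ∪ I.F = ↑H

/-- L-stable model: a partial stable model with `⊆`-maximal `T ∪ F`. -/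
def IsLStableModel (H : Finset α) (P : NLP α) (I : Interp α) : Prop :=
  IsPSModel H P I ∧ ∀ J, IsPSModel H P J → ¬ (I.T ∪ I.F) ⊂ (J.T ∪ J.F)

/-- `IsStatement P c V R`: there is a statement of `P` with conclusion `c`,
vulnerabilities `V` and rules `R`.  A statement is built from a rule
`r = c ← a₁,…,a_m, not b₁,…,not b_n ∈ P` together with statements `sᵢ` for the
positive body atoms `aᵢ` (with `r` not among their rules); its vulnerabilities
are `Vul(s₁) ∪ … ∪ Vul(s_m) ∪ {b₁,…,b_n}` and its rules are
`Rules(s₁) ∪ … ∪ Rules(s_m) ∪ {r}`. -/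
inductive IsStatement (P : NLP α) : α → Finset α → Finset (Rule α) → Prop where
  | mk (r : Rule α) (hr : r ∈ P) (v : α → Finset α) (ρ : α → Finset (Rule α))
      (hsub : ∀ a ∈ r.bodyPos, IsStatement P a (v a) (ρ a))
      (hnr : ∀ a ∈ r.bodyPos, r ∉ ρ a) :
      IsStatement P r.head (r.bodyPos.biUnion v ∪ r.bodyNeg)
        (insert r (r.bodyPos.biUnion ρ))

/-- `c` is an argument of `P`: it is the conclusion of some statement. -/
def IsArg (P : NLP α) (c : α) : Prop := ∃ V R, IsStatement P c V R

open Classical in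
/-- The set `A_P` of arguments of `P`. -/
noncomputable def argsOf (P : NLP α) : Finset α := (HB P).filter (IsArg P)

/-- `B` meets every vulnerability set of `a` in `P`. -/
def HitsVul (P : NLP α) (B : Finset α) (a : α) : Prop :=
  ∀ V R, IsStatement P a V R → ∃ b ∈ B, b ∈ V

/-- A SETAF: a finite set of arguments and an attack relation between
finite sets of arguments and arguments. -/
structure SETAF (α : Type) where
  args : Finset α
  att : Finset α → α → Prop

/-- Well-formedness of a SETAF: attackers are nonempty sets of arguments
attacking arguments, and attacking sets are `⊆`-minimal. -/
def SETAF.Wf (S : SETAF α) : Prop :=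
  (∀ B a, S.att B a → B.Nonempty ∧ B ⊆ S.args ∧ a ∈ S.args) ∧
  (∀ B a, S.att B a → ∀ B', B' ⊂ B → ¬ S.att B' a)

/-- The SETAF `𝔄_P` associated with an NLP `P`: its arguments are the
conclusions of the statements of `P`, and `B` attacks `a` iff `B` is a
`⊆`-minimal set of arguments meeting every vulnerability set of `a`. -/
noncomputable def setafOf (P : NLP α) : SETAF α where
  args := argsOf P
  att := fun B a =>
    B ⊆ argsOf P ∧ a ∈ argsOf P ∧ HitsVul P B a ∧ ∀ B', B' ⊂ B → ¬ HitsVul P B' a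

/-- Labels for arguments. -/
inductive Lab : Type
  | inn | out | und
deriving DecidableEq

/-- `in(L)`. -/
def labIn (S : SETAF α) (L : α → Lab) : Set α := { a | a ∈ S.args ∧ L a = Lab.inn }

/-- `out(L)`. -/
def labOut (S : SETAF α) (L : α → Lab) : Set α := { a | a ∈ S.args ∧ L a = Lab.out }

/-- `undec(L)`. -/
def labUnd (S : SETAF α) (L : α → Lab) : Set α := { a | a ∈ S.args ∧ L a = Lab.und }

/-- Admissible labelling. -/
def AdmissibleLab (S : SETAF α) (L : α → Lab) : Prop :=
  ∀ a ∈ S.args,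
    (L a = Lab.inn → ∀ B, S.att B a → ∃ b ∈ B, L b = Lab.out) ∧
    (L a = Lab.out → ∃ B, S.att B a ∧ ∀ b ∈ B, L b = Lab.inn)

/-- Complete labelling. -/
def CompleteLab (S : SETAF α) (L : α → Lab) : Prop :=
  AdmissibleLab S L ∧
  ∀ a ∈ S.args, L a = Lab.und →
    (∃ B, S.att B a ∧ ∀ b ∈ B, L b ≠ Lab.out) ∧
    (∀ B, S.att B a → ∃ b ∈ B, L b ≠ Lab.inn)

/-- Grounded labelling: complete with `⊆`-minimal `in(L)`. -/
def GroundedLab (S : SETAF α) (L : α → Lab) : Prop :=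
  CompleteLab S L ∧ ∀ L', CompleteLab S L' → ¬ labIn S L' ⊂ labIn S L

/-- Preferred labelling: complete with `⊆`-maximal `in(L)`. -/
def PreferredLab (S : SETAF α) (L : α → Lab) : Prop :=
  CompleteLab S L ∧ ∀ L', CompleteLab S L' → ¬ labIn S L ⊂ labIn S L'

/-- Stable labelling: complete with `undec(L) = ∅`. -/
def StableLab (S : SETAF α) (L : α → Lab) : Prop :=
  CompleteLab S L ∧ labUnd S L = ∅

/-- Semi-stable labelling: complete with `⊆`-minimal `undec(L)`. -/
def SemiStableLab (S : SETAF α) (L : α → Lab) : Prop :=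
  CompleteLab S L ∧ ∀ L', CompleteLab S L' → ¬ labUnd S L' ⊂ labUnd S L

/-- `L2I_P`: the interpretation associated with a labelling of `𝔄_P`. -/
def L2I (P : NLP α) (L : α → Lab) : Interp α where
  T := { c | c ∈ HB P ∧ c ∈ argsOf P ∧ L c = Lab.inn }
  F := { c | c ∈ HB P ∧ (c ∉ argsOf P ∨ (c ∈ argsOf P ∧ L c = Lab.out)) }

open Classical in
/-- `I2L`: the labelling associated with an interpretation (meaningful on
the arguments). -/
noncomputable def I2L (I : Interp α) : α → Lab := fun c =>
  if c ∈ I.T then Lab.inn else if c ∈ I.F then Lab.out else Lab.und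

/-- `L2I_𝔄`: the interpretation `⟨in(L), out(L)⟩` associated with a labelling
of a SETAF `𝔄`. -/
def L2Iset (S : SETAF α) (L : α → Lab) : Interp α := ⟨labIn S L, labOut S L⟩

/-- `V` meets every attacker of `a` in `S`. -/
def HitsAtt (S : SETAF α) (a : α) (V : Finset α) : Prop :=
  ∀ B, S.att B a → ∃ b ∈ B, b ∈ V

/-- `V ∈ V_a`: a `⊆`-minimal set of arguments meeting every attacker of `a`. -/
def MemVa (S : SETAF α) (a : α) (V : Finset α) : Prop :=
  V ⊆ S.args ∧ HitsAtt S a V ∧ ∀ V', V' ⊂ V → ¬ HitsAtt S a V'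

open Classical in
/-- The NLP `P_𝔄` associated with a SETAF `𝔄`:
`{ a ← not b₁,…,not b_n | a ∈ A, {b₁,…,b_n} ∈ V_a }`. -/
noncomputable def nlpOf (S : SETAF α) : NLP α :=
  ((S.args ×ˢ S.args.powerset).filter (fun p => MemVa S p.1 p.2)).image
    (fun p => { head := p.1, bodyPos := ∅, bodyNeg := p.2 })

/-- Redundancy-Free Atomic Logic Program: every rule is atomic (no positive
body), every atom is a head, and no rule's negative body strictly contains
that of another rule with the same head. -/
def IsRFALP (P : NLP α) : Prop :=
  (∀ r ∈ P, r.bodyPos = ∅) ∧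
  HB P = P.image Rule.head ∧
  ∀ r ∈ P, ∀ r' ∈ P, r'.head = r.head → ¬ r'.bodyNeg ⊂ r.bodyNeg

/-- Unfolding: replace a rule `c ← a, a₁,…,a_m, not b₁,…,not b_n` by all rules
obtained by resolving `a` against the rules of the program with head `a`. -/
def StepU (P₁ P₂ : NLP α) : Prop :=
  ∃ r ∈ P₁, ∃ a ∈ r.bodyPos,
    P₂ = P₁.erase r ∪
      (P₁.filter (fun r' => r'.head = a)).image
        (fun r' => { head := r.head,
                     bodyPos := r'.bodyPos ∪ r.bodyPos.erase a,
                     bodyNeg := r'.bodyNeg ∪ r.bodyNeg })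

/-- Elimination of tautologies: delete a rule whose head occurs in its
positive body. -/
def StepT (P₁ P₂ : NLP α) : Prop :=
  ∃ r ∈ P₁, r.head ∈ r.bodyPos ∧ P₂ = P₁.erase r

/-- Positive reduction: delete a literal `not b` from the body of a rule,
where `b` is not the head of any rule of the program. -/
def StepP (P₁ P₂ : NLP α) : Prop :=
  ∃ r ∈ P₁, ∃ b ∈ r.bodyNeg, (∀ r' ∈ P₁, r'.head ≠ b) ∧
    P₂ = insert { head := r.head, bodyPos := r.bodyPos,
                  bodyNeg := r.bodyNeg.erase b } (P₁.erase r)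

/-- Elimination of non-minimal rules: delete a rule subsumed by a distinct
rule with the same head and smaller bodies. -/
def StepM (P₁ P₂ : NLP α) : Prop :=
  ∃ r ∈ P₁, ∃ r' ∈ P₁, r ≠ r' ∧ r'.head = r.head ∧
    r'.bodyPos ⊆ r.bodyPos ∧ r'.bodyNeg ⊆ r.bodyNeg ∧ P₂ = P₁.erase r

/-- `↦_UTPM`: the union of the four transformations. -/
def StepUTPM (P₁ P₂ : NLP α) : Prop :=
  StepU P₁ P₂ ∨ StepT P₁ P₂ ∨ StepP P₁ P₂ ∨ StepM P₁ P₂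

/-- `P` is irreducible w.r.t. `↦_UTPM`: there is no `P' ≠ P` with
`P ↦_UTPM P'`. -/
def UTPMIrreducible (P : NLP α) : Prop :=
  ¬ ∃ P', StepUTPM P P' ∧ P' ≠ P

/-- Derivation trees: like statements but rules may repeat along branches;
`S` constrains all negative body atoms occurring in the tree. -/
inductive Deriv (P : NLP α) (S : Set α) : α → Prop
  | mk (r : Rule α) (hr : r ∈ P) (hneg : ∀ b ∈ r.bodyNeg, b ∈ S)
      (hsub : ∀ a ∈ r.bodyPos, Deriv P S a) : Deriv P S r.head

lemma IsStatement.sub {P : NLP α} {c : α} {V : Finset α} {R : Finset (Rule α)}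
    (h : IsStatement P c V R) :
    ∀ r0 ∈ R, ∃ V' R', IsStatement P r0.head V' R' ∧ V' ⊆ V ∧ R' ⊆ R := by
  induction h with
  | mk r hr v ρ hsub hnr ih =>
    intro r0 hr0
    rcases Finset.mem_insert.mp hr0 with rfl | hr0
    · exact ⟨_, _, IsStatement.mk _ hr v ρ hsub hnr, subset_rfl, subset_rfl⟩
    · obtain ⟨a, ha, hρ⟩ := Finset.mem_biUnion.mp hr0
      obtain ⟨V', R', hs, hV, hR⟩ := ih a ha r0 hρ
      refine ⟨V', R', hs, ?_, ?_⟩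
      · exact hV.trans ((Finset.subset_biUnion_of_mem v ha).trans Finset.subset_union_left)
      · exact hR.trans ((Finset.subset_biUnion_of_mem ρ ha).trans (Finset.subset_insert _ _))

lemma deriv_to_stmt {P : NLP α} {S : Set α} {c : α} (h : Deriv P S c) :
    ∃ V R, IsStatement P c V R ∧ ∀ b ∈ V, b ∈ S := by
  induction h with
  | mk r hr hneg hsub ih =>
    have ih' : ∀ a, ∃ V R, a ∈ r.bodyPos →
        IsStatement P a V R ∧ ∀ b ∈ V, b ∈ S := by
      intro a
      by_cases ha : a ∈ r.bodyPos
      · obtain ⟨V, R, h1, h2⟩ := ih a ha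
        exact ⟨V, R, fun _ => ⟨h1, h2⟩⟩
      · exact ⟨∅, ∅, fun h' => absurd h' ha⟩
    choose v ρ hvρ using ih'
    by_cases hcase : ∃ a ∈ r.bodyPos, r ∈ ρ a
    · obtain ⟨a, ha, hra⟩ := hcase
      obtain ⟨hs, hS⟩ := hvρ a ha
      obtain ⟨V', R', hs', hV', _⟩ := hs.sub r hra
      exact ⟨V', R', hs', fun b hb => hS b (hV' hb)⟩
    · push_neg at hcase
      refine ⟨_, _, IsStatement.mk r hr v ρ (fun a ha => (hvρ a ha).1) hcase, ?_⟩
      intro b hb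
      rcases Finset.mem_union.mp hb with hb | hb
      · obtain ⟨a, ha, hba⟩ := Finset.mem_biUnion.mp hb
        exact (hvρ a ha).2 b hba
      · exact hneg b hb

lemma stmt_to_deriv {P : NLP α} {S : Set α} {c : α} {V : Finset α}
    {R : Finset (Rule α)} (h : IsStatement P c V R) :
    (∀ b ∈ V, b ∈ S) → Deriv P S c := by
  induction h with
  | mk r hr v ρ hsub hnr ih =>
    intro hV
    refine Deriv.mk r hr (fun b hb => hV b (Finset.mem_union_right _ hb)) ?_
    intro a ha
    exact ih a ha (fun b hb => hV b
      (Finset.mem_union_left _ (Finset.mem_biUnion.mpr ⟨a, ha, hb⟩)))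


lemma psiIter_step (H : Finset α) (Q : Set (PosRule α)) :
    ∀ n, (PsiIter H Q n).T ⊆ (PsiIter H Q (n+1)).T ∧
      (PsiIter H Q (n+1)).F ⊆ (PsiIter H Q n).F := by
  intro n
  induction n with
  | zero =>
    refine ⟨fun c hc => absurd hc (Set.notMem_empty c), fun c hc => ?_⟩
    exact Finset.mem_coe.mpr hc.1
  | succ n ih =>
    constructor
    · rintro c ⟨hcH, q, hq, h1, h2, h3⟩
      exact ⟨hcH, q, hq, h1, h2, fun a ha => ih.1 (h3 a ha)⟩
    · rintro c ⟨hcH, hall⟩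
      refine ⟨hcH, fun q hq hh => ?_⟩
      obtain ⟨a, ha, haF⟩ := hall q hq hh
      exact ⟨a, ha, ih.2 haF⟩

lemma psiIter_T_mono (H : Finset α) (Q : Set (PosRule α)) {m n : ℕ} (h : m ≤ n) :
    (PsiIter H Q m).T ⊆ (PsiIter H Q n).T := by
  induction h with
  | refl => exact subset_rfl
  | step h ih => exact ih.trans (psiIter_step H Q _).1

lemma psiIter_F_anti (H : Finset α) (Q : Set (PosRule α)) {m n : ℕ} (h : m ≤ n) :
    (PsiIter H Q n).F ⊆ (PsiIter H Q m).F := by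
  induction h with
  | refl => exact subset_rfl
  | step h ih => exact ((psiIter_step H Q _).2).trans ih

lemma head_mem_HB {P : NLP α} {r : Rule α} (hr : r ∈ P) : r.head ∈ HB P :=
  Finset.mem_sup.mpr ⟨r, hr, Finset.mem_insert_self _ _⟩

lemma bodyPos_mem_HB {P : NLP α} {r : Rule α} (hr : r ∈ P) {a : α}
    (ha : a ∈ r.bodyPos) : a ∈ HB P :=
  Finset.mem_sup.mpr ⟨r, hr, Finset.mem_insert.mpr
    (Or.inr (Finset.mem_union_left _ ha))⟩

lemma T_to_deriv {P : NLP α} {I : Interp α} :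
    ∀ n, ∀ c, c ∈ (PsiIter (HB P) (reduct P I) n).T → Deriv P I.F c := by
  intro n
  induction n with
  | zero => intro c hc; exact absurd hc (Set.notMem_empty c)
  | succ n ih =>
    rintro c ⟨hcH, q, ⟨r, hr, hnT, h1, h2, h3⟩, hqc, hnU, hb⟩
    have hneg : ∀ b ∈ r.bodyNeg, b ∈ I.F := by
      intro b hb'
      by_contra hbF
      exact hnU (h3.mpr ⟨b, hb', hbF⟩)
    have hc' : c = r.head := by rw [← hqc, h1]
    subst hc'
    exact Deriv.mk r hr hneg (fun a ha => ih a (hb a (by rw [h2]; exact ha)))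

lemma deriv_to_T {P : NLP α} {I : Interp α} (hI : IsInterp (HB P) I) {c : α}
    (h : Deriv P I.F c) : ∃ n, c ∈ (PsiIter (HB P) (reduct P I) n).T := by
  induction h with
  | mk r hr hneg hsub ih =>
    have ih' : ∀ a, ∃ n, a ∈ r.bodyPos →
        a ∈ (PsiIter (HB P) (reduct P I) n).T := by
      intro a
      by_cases ha : a ∈ r.bodyPos
      · obtain ⟨n, hn⟩ := ih a ha; exact ⟨n, fun _ => hn⟩
      · exact ⟨0, fun h' => absurd h' ha⟩
    choose f hf using ih'
    refine ⟨r.bodyPos.sup f + 1, head_mem_HB hr,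
      ⟨r.head, r.bodyPos, ∃ b ∈ r.bodyNeg, b ∉ I.F⟩,
      ⟨r, hr, ?_, rfl, rfl, Iff.rfl⟩, rfl, ?_, ?_⟩
    · intro b hb hbT
      exact Set.disjoint_left.mp hI.2.2 hbT (hneg b hb)
    · rintro ⟨b, hb, hbF⟩
      exact hbF (hneg b hb)
    · intro a ha
      exact psiIter_T_mono _ _ (Finset.le_sup ha) (hf a ha)

lemma deriv_to_notF {P : NLP α} {I : Interp α} {c : α}
    (h : Deriv P I.Tᶜ c) : ∃ n, c ∉ (PsiIter (HB P) (reduct P I) n).F := by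
  induction h with
  | mk r hr hneg hsub ih =>
    have ih' : ∀ a, ∃ n, a ∈ r.bodyPos →
        a ∉ (PsiIter (HB P) (reduct P I) n).F := by
      intro a
      by_cases ha : a ∈ r.bodyPos
      · obtain ⟨n, hn⟩ := ih a ha; exact ⟨n, fun _ => hn⟩
      · exact ⟨0, fun h' => absurd h' ha⟩
    choose f hf using ih'
    refine ⟨r.bodyPos.sup f + 1, ?_⟩
    rintro ⟨hcH, hall⟩
    obtain ⟨a, ha, haF⟩ := hall ⟨r.head, r.bodyPos, ∃ b ∈ r.bodyNeg, b ∉ I.F⟩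
      ⟨r, hr, fun b hb => hneg b hb, rfl, rfl, Iff.rfl⟩ rfl
    exact hf a ha (psiIter_F_anti _ _ (Finset.le_sup ha) haF)

lemma notderiv_to_F {P : NLP α} {I : Interp α} :
    ∀ n, ∀ c, c ∈ HB P → ¬ Deriv P I.Tᶜ c →
      c ∈ (PsiIter (HB P) (reduct P I) n).F := by
  intro n
  induction n with
  | zero => intro c hc _; exact Finset.mem_coe.mpr hc
  | succ n ih =>
    intro c hc hd
    refine ⟨hc, ?_⟩
    rintro q ⟨r, hr, hnT, h1, h2, h3⟩ hqc
    by_contra hno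
    push_neg at hno
    apply hd
    have hc' : c = r.head := by rw [← hqc, h1]
    subst hc'
    refine Deriv.mk r hr (fun b hb => hnT b hb) ?_
    intro a ha
    by_contra hnd
    exact hno a (by rw [h2]; exact ha) (ih a (bodyPos_mem_HB hr ha) hnd)


theorem stmt0 (P : NLP α) (I : Interp α) (hI : IsInterp (HB P) I) :
    (∀ c ∈ HB P, c ∈ (OmegaOp (HB P) P I).T ↔
      ∃ V R, IsStatement P c V R ∧ ∀ b ∈ V, b ∈ I.F) ∧
    (∀ c ∈ HB P, c ∈ (OmegaOp (HB P) P I).F ↔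
      ∀ V R, IsStatement P c V R → ∃ b ∈ V, b ∈ I.T) := by
  constructor
  · intro c _
    constructor
    · intro h
      obtain ⟨n, hn⟩ := Set.mem_iUnion.mp h
      exact deriv_to_stmt (T_to_deriv n c hn)
    · rintro ⟨V, R, hs, hV⟩
      obtain ⟨n, hn⟩ := deriv_to_T hI (stmt_to_deriv hs hV)
      exact Set.mem_iUnion.mpr ⟨n, hn⟩
  · intro c hc
    constructor
    · intro h V R hs
      by_contra hb
      push_neg at hb
      obtain ⟨n, hn⟩ := deriv_to_notF (stmt_to_deriv hs (fun b hbV => hb b hbV))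
      exact hn (Set.mem_iInter.mp h n)
    · intro hall
      refine Set.mem_iInter.mpr fun n => notderiv_to_F n c hc fun hd => ?_
      obtain ⟨V, R, hs, hV⟩ := deriv_to_stmt hd
      obtain ⟨b, hbV, hbT⟩ := hall V R hs
      exact hV b hbV hbT
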